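/- In a resolvable continuous enumerated tree of models, every closed branch b has a resolution: there is a limit ordinal δ and an increasing continuous sequence ⟨b_i : i ≤ δ⟩ of closed bounded branches with b = b_δ (allowing the constant sequence if b itself is bounded). -/

import Mathlib

universe u

open Set

/-- A continuous enumerated tree of models.  The well-ordered type `ι` (with bottom
element `⊥`) plays the role of the ordinal `α` with its enumeration order `≤`; `tle`
is the tree order `⊑`; the models `M i` are represented by their universes, which
are subsets of the universe `Ω` of the ambient model `N`; `kle M₁ M₂` is the
relation `M₁ ≤ₖ M₂` on universes of structures, and `kle A Set.univ` means
`A ≤ₖ N`. -/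
structure CETM (Ω : Type u) (ι : Type u) [LinearOrder ι] [OrderBot ι] [WellFoundedLT ι] where
  /-- the tree (partial) order `⊑` -/
  tle : ι → ι → Prop
  tle_refl : ∀ i, tle i i
  tle_trans : ∀ {i j k}, tle i j → tle j k → tle i k
  tle_antisymm : ∀ {i j}, tle i j → tle j i → i = j
  /-- `0` is the root of the tree -/
  bot_tle : ∀ i, tle ⊥ i
  /-- if `j` is above `i` in the tree then it is enumerated later -/
  le_of_tle : ∀ {i j}, tle i j → i ≤ j
  /-- the set of tree-predecessors of a node is linearly ordered by `⊑`
  (together with well-foundedness of `ι` this makes it well-ordered) -/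
  pred_linear : ∀ {i j k}, tle j i → tle k i → tle j k ∨ tle k j
  /-- the strong substructure relation `≤ₖ` of the ambient weak AEC -/
  kle : Set Ω → Set Ω → Prop
  /-- the universes of the models of the tree -/
  M : ι → Set Ω
  /-- every model of the tree is a `≤ₖ`-substructure of the ambient model `N` -/
  M_le_N : ∀ i, kle (M i) Set.univ
  M_mono : ∀ {i j}, tle i j → kle (M i) (M j)

namespace CETM

variable {Ω ι : Type u} [LinearOrder ι] [OrderBot ι] [WellFoundedLT ι] (T : CETM Ω ι)

/-- `pred⊑(i)`, the set of strict tree-predecessors of `i`. -/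
def spred (i : ι) : Set ι := {k | T.tle k i ∧ k ≠ i}

/-- `u` has a `⊑`-maximum. -/
def HasMax (u : Set ι) : Prop := ∃ m ∈ u, ∀ k ∈ u, T.tle k m

/-- Continuity of the underlying enumerated tree: if `pred(i) = pred(j)` and `pred(i)`
has no maximum, then `i = j`. -/
def TreeContinuous : Prop :=
  ∀ i j, T.spred i = T.spred j → ¬ T.HasMax (T.spred i) → i = j

/-- Continuity for the models: if `pred(i)` is a nonempty set with no maximum and
`⋃_{j ⊏ i} M j ≤ₖ N`, then `M i = ⋃_{j ⊏ i} M j`. -/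
def ModelContinuous : Prop :=
  ∀ i, (T.spred i).Nonempty → ¬ T.HasMax (T.spred i) →
    T.kle (⋃ j ∈ T.spred i, T.M j) Set.univ → T.M i = ⋃ j ∈ T.spred i, T.M j

/-- A branch: a subset of the tree linearly ordered by `⊑` and closed under
`⊑`-predecessors. -/
def IsBranch (b : Set ι) : Prop :=
  (∀ i ∈ b, ∀ j ∈ b, T.tle i j ∨ T.tle j i) ∧ ∀ i ∈ b, T.spred i ⊆ b

/-- `B(u)`: the set of branches contained in `u` that are maximal among branches
contained in `u`. -/
def maxBranches (u : Set ι) : Set (Set ι) :=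
  {b | T.IsBranch b ∧ b ⊆ u ∧ ∀ b', T.IsBranch b' → b ⊆ b' → b' ⊆ u → b' = b}

/-- `u` is closed: it is closed under `⊑`-predecessors and the union of the models
along any nonempty maximal branch of `u` is a `≤ₖ`-substructure of the ambient
model `N`. -/
def Closed (u : Set ι) : Prop :=
  (∀ i ∈ u, T.spred i ⊆ u) ∧
    ∀ b ∈ T.maxBranches u, b.Nonempty → T.kle (⋃ i ∈ b, T.M i) Set.univ

end CETM

namespace CETM

variable {Ω ι : Type u} [LinearOrder ι] [OrderBot ι] [WellFoundedLT ι] (T : CETM Ω ι)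

/-- A branch is bounded if it has a `⊑`-maximum or equals `pred(i)` for some node. -/
def BoundedBranch (b : Set ι) : Prop := T.HasMax b ∨ ∃ i, b = T.spred i

/-- The tree is resolvable: every branch has only finitely many points `i` where
`⋃_{j ⊏ i} M_j` fails to be a `≤ₖ`-substructure of `N`. -/
def Resolvable : Prop :=
  ∀ b : Set ι, T.IsBranch b →
    Set.Finite {i ∈ b | ¬ T.kle (⋃ j ∈ T.spred i, T.M j) Set.univ}

end CETM

/-!
A bounded closed branch is resolved by a constant sequence. Otherwise `b` has no maximum, and
by resolvability only finitely many `x ∈ b` have `⋃_{j ⊏ x} M_j` not `≤ₖ N`, so there is `a ∈ b`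
beyond which every `pred(x)` is a closed bounded branch. Enumerating the tail
`{x ∈ b | a ≤ x} = ⟨x_i : i < δ⟩` in increasing order, the sets `pred(x_i)` increase
continuously with union `b`, and `δ` is a limit ordinal because `b` has no maximum.
-/

open Order Ordinal

lemma exists_mem_forall_lt_of_finite {α : Type*} [LinearOrder α] {b S : Set α}
    (hb : ∀ x ∈ b, ∃ y ∈ b, x < y) (hne : b.Nonempty) (hS : S.Finite) (hSb : S ⊆ b) :
    ∃ a ∈ b, ∀ s ∈ S, s < a := by
  obtain ⟨b₀, hb₀⟩ := hne
  obtain ⟨m, hm, hmax⟩ := (insert b₀ S).exists_max_image id (hS.insert b₀) ⟨b₀, mem_insert _ _⟩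
  obtain ⟨a, ha, hma⟩ := hb m (insert_subset hb₀ hSb hm)
  exact ⟨a, ha, fun s hs => (hmax s (mem_insert_of_mem _ hs)).trans_lt hma⟩

lemma exists_limit_continuous_chain_of_noMax {α : Type u} [LinearOrder α] [WellFoundedLT α]
    {b : Set α} (hb : ∀ x ∈ b, ∃ y ∈ b, x < y) {a : α} (ha : a ∈ b) :
    ∃ (δ : Ordinal.{u}) (f : Ordinal.{u} → Set α), IsSuccLimit δ ∧ f δ = b ∧ Monotone f ∧
      (∀ j, IsSuccLimit j → f j = ⋃ i ∈ Iio j, f i) ∧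
      ∀ i < δ, ∃ x ∈ b, a ≤ x ∧ f i = {k ∈ b | k < x} := by
  set c : Set α := b ∩ Ici a
  have : NoMaxOrder c := ⟨fun x => by
    obtain ⟨y, hy, hxy⟩ := hb x x.2.1
    exact ⟨⟨y, hy, x.2.2.trans hxy.le⟩, hxy⟩⟩
  have : Nonempty c := ⟨⟨a, ha, le_rfl⟩⟩
  -- `f j` is the part of `b` below `a` together with the points of the tail `c` of rank `< j`.
  set f : Ordinal.{u} → Set α :=
    fun j => {k ∈ b | ∀ y : c, (y : α) = k → typein (α := c) (· < ·) y < j}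
  have hmono : Monotone f := fun i j hij k hk => ⟨hk.1, fun y hy => (hk.2 y hy).trans_le hij⟩
  refine ⟨typeLT c, f, isSuccLimit_iff.2 ⟨type_ne_zero_iff_nonempty.2 ‹_›, isSuccPrelimit_type_lt⟩,
    ?_, hmono, fun j hj => ?_, fun i hi => ?_⟩
  · exact sep_eq_self_iff_mem_true.2 fun k _ y _ => typein_lt_type _ y
  · refine (iUnion₂_subset fun i hi => hmono (mem_Iio.1 hi).le).antisymm' ?_
    rintro k ⟨hk, hrank⟩
    by_cases hkc : k ∈ c
    · refine mem_biUnion (hj.succ_lt (hrank ⟨k, hkc⟩ rfl)) ⟨hk, ?_⟩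
      rintro y rfl
      exact lt_succ _
    · exact mem_biUnion (mem_Iio.2 hj.pos) ⟨hk, fun y hy => absurd (hy ▸ y.2) hkc⟩
  · set x : c := enum (α := c) (· < ·) ⟨i, hi⟩
    have hxi : typein (α := c) (· < ·) x = i := typein_enum _ hi
    refine ⟨x, x.2.1, x.2.2, sep_ext_iff.2 fun k hk => ⟨fun hrank => ?_, ?_⟩⟩
    · by_cases hak : a ≤ k
      · have hlt := hrank ⟨k, hk, hak⟩ rfl
        rwa [← hxi, typein_lt_typein] at hlt
      · exact (not_le.1 hak).trans_le x.2.2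
    · rintro hkx y rfl
      rwa [← hxi, typein_lt_typein]

namespace CETM

variable {Ω ι : Type u} [LinearOrder ι] [OrderBot ι] [WellFoundedLT ι] (T : CETM Ω ι)

lemma spred_bot : T.spred ⊥ = ∅ :=
  eq_empty_of_forall_notMem fun _ hk => hk.2 (le_bot_iff.1 (T.le_of_tle hk.1))

lemma boundedBranch_empty : T.BoundedBranch ∅ :=
  Or.inr ⟨⊥, T.spred_bot.symm⟩

lemma isBranch_spred (x : ι) : T.IsBranch (T.spred x) := by
  refine ⟨fun i hi j hj => T.pred_linear hi.1 hj.1, ?_⟩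
  rintro i ⟨hix, -⟩ j ⟨hji, hjnei⟩
  refine ⟨T.tle_trans hji hix, ?_⟩
  rintro rfl
  exact hjnei (T.tle_antisymm hji hix)

variable {T}

lemma IsBranch.closed {b : Set ι} (hb : T.IsBranch b) (h : T.kle (⋃ i ∈ b, T.M i) univ) :
    T.Closed b :=
  ⟨hb.2, fun _ ⟨_, hb'b, hmax⟩ _ => hmax b hb hb'b subset_rfl ▸ h⟩

lemma IsBranch.tle_of_le {b : Set ι} (hb : T.IsBranch b) {x y : ι} (hx : x ∈ b) (hy : y ∈ b)
    (hxy : x ≤ y) : T.tle x y := by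
  rcases hb.1 x hx y hy with hxy' | hyx
  · exact hxy'
  · obtain rfl := le_antisymm (T.le_of_tle hyx) hxy
    exact hyx

lemma IsBranch.spred_eq {b : Set ι} (hb : T.IsBranch b) {x : ι} (hx : x ∈ b) :
    T.spred x = {k ∈ b | k < x} := by
  ext k
  exact ⟨fun hk => ⟨hb.2 x hx hk, lt_of_le_of_ne (T.le_of_tle hk.1) hk.2⟩,
    fun hk => ⟨hb.tle_of_le hk.1 hx hk.2.le, hk.2.ne⟩⟩

lemma IsBranch.exists_lt_of_not_hasMax {b : Set ι} (hb : T.IsBranch b) (h : ¬T.HasMax b) :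
    ∀ x ∈ b, ∃ y ∈ b, x < y := by
  intro x hx
  by_contra! hle
  exact h ⟨x, hx, fun k hk => hb.tle_of_le hk hx (hle k hk)⟩

lemma Resolvable.exists_forall_le_kle_iUnion_spred (hres : T.Resolvable) {b : Set ι}
    (hb : T.IsBranch b) (hne : b.Nonempty) (hnomax : ∀ x ∈ b, ∃ y ∈ b, x < y) :
    ∃ a ∈ b, ∀ x ∈ b, a ≤ x → T.kle (⋃ j ∈ T.spred x, T.M j) univ := by
  obtain ⟨a, ha, hbad⟩ := exists_mem_forall_lt_of_finite hnomax hne (hres b hb) (sep_subset _ _)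
  exact ⟨a, ha, fun x hx hax => by_contra fun h => (hbad x ⟨hx, h⟩).not_ge hax⟩

end CETM

theorem closed_branch_resolution_general {Ω ι : Type u}
    [LinearOrder ι] [OrderBot ι] [WellFoundedLT ι]
    (T : CETM Ω ι)
    (hres : T.Resolvable)
    (b : Set ι) (hb : T.IsBranch b) (hbclosed : T.Closed b) :
    ∃ (δ : Ordinal.{u}) (f : Ordinal.{u} → Set ι), Order.IsSuccLimit δ ∧
      f δ = b ∧
      (∀ i j, i ≤ j → j ≤ δ → f i ⊆ f j) ∧
      (∀ j ≤ δ, Order.IsSuccLimit j → f j = ⋃ i ∈ Set.Iio j, f i) ∧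
      (∀ i < δ, T.IsBranch (f i) ∧ T.Closed (f i) ∧ T.BoundedBranch (f i)) := by
  by_cases hbd : T.BoundedBranch b
  · exact ⟨ω, fun _ => b, isSuccLimit_omega0, rfl, fun _ _ _ _ => subset_rfl,
      fun j _ hj => (biUnion_const ⟨0, hj.pos⟩ b).symm, fun _ _ => ⟨hb, hbclosed, hbd⟩⟩
  have hne : b.Nonempty := nonempty_iff_ne_empty.2 fun h => hbd (h ▸ T.boundedBranch_empty)
  have hnomax := hb.exists_lt_of_not_hasMax fun h => hbd (Or.inl h)
  obtain ⟨a, ha, hgood⟩ := hres.exists_forall_le_kle_iUnion_spred hb hne hnomax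
  obtain ⟨δ, f, hδ, hfδ, hmono, hcont, hseg⟩ := exists_limit_continuous_chain_of_noMax hnomax ha
  refine ⟨δ, f, hδ, hfδ, fun i j hij _ => hmono hij, fun j _ hj => hcont j hj, fun i hi => ?_⟩
  obtain ⟨x, hx, hax, hfi⟩ := hseg i hi
  rw [hfi, ← hb.spred_eq hx]
  exact ⟨T.isBranch_spred x, (T.isBranch_spred x).closed (hgood x hx hax), Or.inr ⟨x, rfl⟩⟩

/-- In a resolvable continuous enumerated tree of models, every closed
branch `b` has a resolution: a limit ordinal `δ` and an increasing continuous
sequence `⟨b_i : i ≤ δ⟩` of closed bounded branches with `b = b_δ`. -/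
theorem closed_branch_resolution {Ω ι : Type u}
    [LinearOrder ι] [OrderBot ι] [WellFoundedLT ι]
    (T : CETM Ω ι) (htc : T.TreeContinuous) (hmc : T.ModelContinuous)
    (hres : T.Resolvable)
    (b : Set ι) (hb : T.IsBranch b) (hbclosed : T.Closed b) :
    ∃ (δ : Ordinal.{u}) (f : Ordinal.{u} → Set ι), Order.IsSuccLimit δ ∧
      f δ = b ∧
      (∀ i j, i ≤ j → j ≤ δ → f i ⊆ f j) ∧
      (∀ j ≤ δ, Order.IsSuccLimit j → f j = ⋃ i ∈ Set.Iio j, f i) ∧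
      (∀ i < δ, T.IsBranch (f i) ∧ T.Closed (f i) ∧ T.BoundedBranch (f i)) :=
  closed_branch_resolution_general T hres b hb hbclosed
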